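/- Let n ≥ 1, d ≥ 0, and Z ⊆ [0,1]^n. Then the following are equivalent: (i) there exists a constant C such that every real polynomial P in n variables of total degree ≤ d with |P(z)| ≤ 1 for all z ∈ Z satisfies |P(x)| ≤ C for all x ∈ [0,1]^n; (ii) there is no nonzero real polynomial in n variables of total degree ≤ d that vanishes identically on Z. -/

import Mathlib

open Polynomial MeasureTheory Set

lemma vanish_cube : ∀ (n : ℕ) (P : MvPolynomial (Fin n) ℝ),
    (∀ x : Fin n → ℝ, (∀ i, x i ∈ Icc (0 : ℝ) 1) → MvPolynomial.eval x P = 0) → P = 0 := by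
  intro n
  induction n with
  | zero =>
    intro P h
    apply MvPolynomial.funext (q := 0)
    intro x
    rw [map_zero]
    exact h x (fun i => i.elim0)
  | succ n ih =>
    intro P h
    set Q := MvPolynomial.finSuccEquiv ℝ n P with hQ
    have hmap : ∀ s : Fin n → ℝ, (∀ i, s i ∈ Icc (0:ℝ) 1) →
        Polynomial.map (MvPolynomial.eval s) Q = 0 := by
      intro s hs
      apply Polynomial.eq_zero_of_infinite_isRoot
      apply Set.Infinite.mono (s := Icc (0:ℝ) 1)
      · intro y hy
        have := h (Fin.cons y s) ?_
        · rw [MvPolynomial.eval_eq_eval_mv_eval'] at this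
          simpa [Polynomial.IsRoot, hQ] using this
        · intro i
          refine Fin.cases ?_ ?_ i
          · simpa using hy
          · intro j; simpa using hs j
      · exact Set.Icc_infinite (by norm_num : (0:ℝ) < 1)
    have hQ0 : Q = 0 := by
      ext i : 1
      apply ih
      intro s hs
      have := hmap s hs
      have := congrArg (fun q => Polynomial.coeff q i) this
      simpa using this
    have h2 := congrArg (MvPolynomial.finSuccEquiv ℝ n).symm hQ0
    rw [hQ] at h2
    simpa using h2

set_option maxHeartbeats 1000000 in
set_option synthInstance.maxHeartbeats 400000 in
theorem d_definite_iff (n : ℕ) (hn : 1 ≤ n) (d : ℕ) (Z : Set (Fin n → ℝ))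
    (hZ : Z ⊆ {x : Fin n → ℝ | ∀ i, x i ∈ Icc (0 : ℝ) 1}) :
    (∃ C : ℝ, ∀ P : MvPolynomial (Fin n) ℝ, P.totalDegree ≤ d →
        (∀ z ∈ Z, |MvPolynomial.eval z P| ≤ 1) →
        ∀ x : Fin n → ℝ, (∀ i, x i ∈ Icc (0 : ℝ) 1) → |MvPolynomial.eval x P| ≤ C) ↔
      ¬ ∃ P : MvPolynomial (Fin n) ℝ, P ≠ 0 ∧ P.totalDegree ≤ d ∧
          ∀ z ∈ Z, MvPolynomial.eval z P = 0 := by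
  constructor
  · rintro ⟨C, hC⟩ ⟨P, hP0, hPd, hPZ⟩
    have hx : ∃ x : Fin n → ℝ, (∀ i, x i ∈ Icc (0:ℝ) 1) ∧ MvPolynomial.eval x P ≠ 0 := by
      by_contra hcon
      push_neg at hcon
      exact hP0 (vanish_cube n P hcon)
    obtain ⟨x, hx1, hx2⟩ := hx
    set a := |MvPolynomial.eval x P| with ha
    have hapos : 0 < a := abs_pos.mpr hx2
    have hb := hC (((|C|+1)/a) • P) ((MvPolynomial.totalDegree_smul_le _ _).trans hPd) ?_ x hx1
    · rw [MvPolynomial.smul_eval, abs_mul] at hb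
      have h1 : |(|C|+1)/a| = (|C|+1)/a := abs_of_pos (by positivity)
      rw [h1, ← ha, div_mul_cancel₀ _ (ne_of_gt hapos)] at hb
      have : C < |C| + 1 := lt_of_le_of_lt (le_abs_self C) (by linarith)
      linarith
    · intro z hz
      rw [MvPolynomial.smul_eval, hPZ z hz, mul_zero, abs_zero]
      norm_num
  · intro hns
    classical
    set V := MvPolynomial.restrictTotalDegree (Fin n) ℝ d with hV
    haveI : Module.Finite ℝ ↥V :=
      inferInstanceAs (Module.Finite ℝ ↥(MvPolynomial.restrictTotalDegree (Fin n) ℝ d))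
    haveI : Module.Free ℝ ↥V :=
      inferInstanceAs (Module.Free ℝ ↥(MvPolynomial.restrictTotalDegree (Fin n) ℝ d))
    set N := Module.finrank ℝ V with hN
    let b : Module.Basis (Fin N) ℝ V := Module.finBasis ℝ V
    let φ : (Fin N → ℝ) ≃ₗ[ℝ] V := b.equivFun.symm
    let L : (Fin n → ℝ) → ((Fin N → ℝ) →L[ℝ] ℝ) := fun z =>
      LinearMap.toContinuousLinearMap
        (((MvPolynomial.aeval z).toLinearMap.comp V.subtype).comp
          (φ : (Fin N → ℝ) →ₗ[ℝ] V))
    have hL : ∀ z v, L z v = MvPolynomial.eval z ((φ v : V) : MvPolynomial (Fin n) ℝ) := by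
      intro z v
      show (LinearMap.toContinuousLinearMap _) v = _
      rw [LinearMap.coe_toContinuousLinearMap']
      simp only [LinearMap.comp_apply, LinearEquiv.coe_coe, Submodule.coe_subtype,
        AlgHom.toLinearMap_apply]
      rw [← MvPolynomial.coe_aeval_eq_eval]
      rfl
    have nonzero : ∀ v : Fin N → ℝ, v ≠ 0 → ∃ z ∈ Z, L z v ≠ 0 := by
      intro v hv
      by_contra hcon
      push_neg at hcon
      apply hns
      refine ⟨((φ v : V) : MvPolynomial (Fin n) ℝ), ?_, ?_, ?_⟩
      · intro h0
        apply hv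
        have h1 : (φ v : V) = 0 := Subtype.ext h0
        have := φ.injective (by simpa using h1)
        simpa using this
      · exact (MvPolynomial.mem_restrictTotalDegree _ _ _).mp (φ v).2
      · intro z hz; rw [← hL]; exact hcon z hz
    obtain ⟨ε, hε, hkey⟩ : ∃ ε > 0, ∀ w : Fin N → ℝ, ‖w‖ = 1 → ∃ z ∈ Z, ε ≤ |L z w| := by
      have hch : ∀ w : Fin N → ℝ, ∃ z, ‖w‖ = 1 → z ∈ Z ∧ L z w ≠ 0 := by
        intro w
        by_cases hw : ‖w‖ = 1
        · obtain ⟨z, hz, hz2⟩ := nonzero w (by intro h; rw [h] at hw; simpa using hw)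
          exact ⟨z, fun _ => ⟨hz, hz2⟩⟩
        · exact ⟨0, fun h => absurd h hw⟩
      choose zc hzc using hch
      set S := Metric.sphere (0 : Fin N → ℝ) 1 with hS
      by_cases hSne : S.Nonempty
      swap
      · refine ⟨1, one_pos, fun w hw => absurd ⟨w, ?_⟩ hSne⟩
        rw [hS, mem_sphere_zero_iff_norm]; exact hw
      have hcover : S ⊆ ⋃ w ∈ S, {u : Fin N → ℝ | |L (zc w) w| / 2 < |L (zc w) u|} := by
        intro w hw
        have hw1 : ‖w‖ = 1 := mem_sphere_zero_iff_norm.mp hw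
        have h2 := (hzc w hw1).2
        exact Set.mem_iUnion₂.mpr ⟨w, hw, half_lt_self (abs_pos.mpr h2)⟩
      obtain ⟨t0, ht0S, ht0fin, ht0cov⟩ :=
        (isCompact_sphere (0 : Fin N → ℝ) 1).elim_finite_subcover_image
          (fun w _ => isOpen_lt continuous_const ((L (zc w)).continuous.abs)) hcover
      set t := ht0fin.toFinset with ht
      have htne : t.Nonempty := by
        obtain ⟨w0, hw0⟩ := hSne
        obtain ⟨w, hw, _⟩ := Set.mem_iUnion₂.mp (ht0cov hw0)
        exact ⟨w, ht0fin.mem_toFinset.mpr hw⟩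
      refine ⟨t.inf' htne (fun w => |L (zc w) w| / 2), ?_, ?_⟩
      · rw [gt_iff_lt, Finset.lt_inf'_iff]
        intro w hw
        have hwS : w ∈ S := ht0S (ht0fin.mem_toFinset.mp hw)
        have hw1 : ‖w‖ = 1 := mem_sphere_zero_iff_norm.mp hwS
        exact half_pos (abs_pos.mpr (hzc w hw1).2)
      · intro w hw1
        have hwS : w ∈ S := mem_sphere_zero_iff_norm.mpr hw1
        obtain ⟨w', hw't, hlt⟩ := Set.mem_iUnion₂.mp (ht0cov hwS)
        have hw'm : w' ∈ t := ht0fin.mem_toFinset.mpr hw't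
        have hw'1 : ‖w'‖ = 1 := mem_sphere_zero_iff_norm.mp (ht0S hw't)
        exact ⟨zc w', (hzc w' hw'1).1, le_trans (Finset.inf'_le _ hw'm) (le_of_lt hlt)⟩
    let D : (Fin n →₀ ℕ) := Finsupp.equivFunOnFinite.symm (fun _ => d)
    let Fs : Finset (Fin n →₀ ℕ) := Finset.Iic D
    let c : (Fin n →₀ ℕ) → ((Fin N → ℝ) →L[ℝ] ℝ) := fun m =>
      LinearMap.toContinuousLinearMap
        ((MvPolynomial.lcoeff ℝ m).comp (V.subtype.comp (φ : (Fin N → ℝ) →ₗ[ℝ] V)))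
    refine ⟨(∑ m ∈ Fs, ‖c m‖) * ε⁻¹, ?_⟩
    intro P hPd hPZ x hx
    by_cases hP0 : P = 0
    · rw [hP0, map_zero, abs_zero]
      positivity
    have hPV : P ∈ V := (MvPolynomial.mem_restrictTotalDegree _ _ _).mpr hPd
    set v : Fin N → ℝ := φ.symm ⟨P, hPV⟩ with hv
    have hφv : ((φ v : V) : MvPolynomial (Fin n) ℝ) = P := by
      rw [hv, LinearEquiv.apply_symm_apply]
    have hv0 : v ≠ 0 := by
      intro h
      apply hP0
      rw [← hφv, h]
      simp
    have hvn : ‖v‖ ≤ ε⁻¹ := by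
      obtain ⟨z, hz, hzle⟩ := hkey (‖v‖⁻¹ • v) (norm_smul_inv_norm hv0)
      rw [ContinuousLinearMap.map_smul, smul_eq_mul, abs_mul, abs_of_nonneg (inv_nonneg.mpr (norm_nonneg v))] at hzle
      have h1 : |L z v| ≤ 1 := by rw [hL, hφv]; exact hPZ z hz
      have hvpos : 0 < ‖v‖ := norm_pos_iff.mpr hv0
      have h2 : ε * ‖v‖ ≤ 1 := by
        have h3 := mul_le_mul_of_nonneg_right hzle (le_of_lt hvpos)
        have h4 : ‖v‖⁻¹ * |L z v| * ‖v‖ = |L z v| := by field_simp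
        rw [h4] at h3
        linarith
      rw [inv_eq_one_div, le_div_iff₀ hε]
      linarith
    have hsupp : P.support ⊆ Fs := by
      intro m hm
      rw [Finset.mem_Iic, Finsupp.le_iff]
      intro i _
      have h1 : m i ≤ m.sum fun _ e => e := by
        by_cases hi : i ∈ m.support
        · exact Finset.single_le_sum (f := fun j => m j) (fun _ _ => Nat.zero_le _) hi
        · simp [Finsupp.notMem_support_iff.mp hi]
      have h2 : (m.sum fun _ e => e) ≤ P.totalDegree := MvPolynomial.le_totalDegree hm
      have h3 : D i = d := by simp [D]
      rw [h3]
      exact le_trans h1 (le_trans h2 hPd)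
    have hprod : ∀ m : Fin n →₀ ℕ, |∏ i ∈ m.support, x i ^ m i| ≤ 1 := by
      intro m
      rw [abs_of_nonneg (Finset.prod_nonneg fun i _ => pow_nonneg (hx i).1 _)]
      exact Finset.prod_le_one (fun i _ => pow_nonneg (hx i).1 _)
        (fun i _ => pow_le_one₀ (hx i).1 (hx i).2)
    have hcoeff : ∀ m, MvPolynomial.coeff m P = c m v := by
      intro m
      show _ = (LinearMap.toContinuousLinearMap _) v
      rw [LinearMap.coe_toContinuousLinearMap']
      simp only [LinearMap.comp_apply, LinearEquiv.coe_coe, Submodule.coe_subtype,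
        MvPolynomial.lcoeff_apply, hφv]
    rw [MvPolynomial.eval_eq]
    calc |∑ m ∈ P.support, MvPolynomial.coeff m P * ∏ i ∈ m.support, x i ^ m i|
        ≤ ∑ m ∈ P.support, |MvPolynomial.coeff m P * ∏ i ∈ m.support, x i ^ m i| :=
          Finset.abs_sum_le_sum_abs _ _
      _ ≤ ∑ m ∈ P.support, |MvPolynomial.coeff m P| := by
          apply Finset.sum_le_sum
          intro m _
          rw [abs_mul]
          calc |MvPolynomial.coeff m P| * |∏ i ∈ m.support, x i ^ m i|
              ≤ |MvPolynomial.coeff m P| * 1 :=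
                mul_le_mul_of_nonneg_left (hprod m) (abs_nonneg _)
            _ = |MvPolynomial.coeff m P| := mul_one _
      _ ≤ ∑ m ∈ Fs, |MvPolynomial.coeff m P| :=
          Finset.sum_le_sum_of_subset_of_nonneg hsupp (fun _ _ _ => abs_nonneg _)
      _ ≤ ∑ m ∈ Fs, ‖c m‖ * ε⁻¹ := by
          apply Finset.sum_le_sum
          intro m _
          rw [hcoeff m]
          calc |c m v| = ‖c m v‖ := (Real.norm_eq_abs _).symm
            _ ≤ ‖c m‖ * ‖v‖ := (c m).le_opNorm v
            _ ≤ ‖c m‖ * ε⁻¹ := mul_le_mul_of_nonneg_left hvn (norm_nonneg _)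
      _ = (∑ m ∈ Fs, ‖c m‖) * ε⁻¹ := (Finset.sum_mul _ _ _).symm
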